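/- Let ρ, σ, τ be density matrices on ℂ^n. Then |F(ρ,σ) − F(τ,σ)| ≤ √2 · √(Δ(τ,ρ)). -/

import Mathlib

open Matrix Filter
open scoped Kronecker ComplexOrder

noncomputable section

/-- The positive semidefinite square root of a matrix, extended by `0` to all matrices. -/
noncomputable def msqrt {n : Type*} [Fintype n] [DecidableEq n] (A : Matrix n n ℂ) :
    Matrix n n ℂ :=
  open scoped Classical in
  if h : A.PosSemidef then
    (h.1.eigenvectorUnitary : Matrix n n ℂ) * diagonal ((↑) ∘ Real.sqrt ∘ h.1.eigenvalues) *
      (star h.1.eigenvectorUnitary : Matrix n n ℂ) else 0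

/-- A density matrix: positive semidefinite with trace one. -/
def IsDensityMatrix {n : Type*} [Fintype n] [DecidableEq n] (ρ : Matrix n n ℂ) : Prop :=
  ρ.PosSemidef ∧ ρ.trace = 1

/-- The fidelity `F(ρ,σ) = Tr √(√ρ σ √ρ)` of two (density) matrices. -/
noncomputable def Fid {n : Type*} [Fintype n] [DecidableEq n] (ρ σ : Matrix n n ℂ) : ℝ :=
  ((msqrt (msqrt ρ * σ * msqrt ρ)).trace).re

/-- The trace distance `Δ(ρ,σ) = (1/2) Tr √((ρ-σ)† (ρ-σ))`. -/
noncomputable def trDist {n : Type*} [Fintype n] [DecidableEq n] (ρ σ : Matrix n n ℂ) : ℝ :=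
  (1 / 2) * ((msqrt ((ρ - σ)ᴴ * (ρ - σ))).trace).re

/-- A quantum channel: a linear map admitting a Kraus representation. -/
def IsQuantumChannel {m n : Type*} [Fintype m] [Fintype n] [DecidableEq m] [DecidableEq n]
    (Λ : Matrix m m ℂ →ₗ[ℂ] Matrix n n ℂ) : Prop :=
  ∃ (N : ℕ) (K : Fin N → Matrix n m ℂ),
    (∀ X, Λ X = ∑ i, K i * X * (K i)ᴴ) ∧ (∑ i, (K i)ᴴ * K i = 1)

/-- The permutation matrix `P_π` on `(ℂ^d)^{⊗k}`. -/
def permMat (d k : ℕ) (π : Equiv.Perm (Fin k)) :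
    Matrix (Fin k → Fin d) (Fin k → Fin d) ℂ :=
  Matrix.of fun f g => if f = g ∘ π then 1 else 0

/-- The orthogonal projector `Π⁺_k` onto the symmetric subspace of `(ℂ^d)^{⊗k}`. -/
noncomputable def symProj (d k : ℕ) : Matrix (Fin k → Fin d) (Fin k → Fin d) ℂ :=
  ((k.factorial : ℂ))⁻¹ • ∑ π : Equiv.Perm (Fin k), permMat d k π

/-- Combine a value for the first tensor factor with values for the remaining factors. -/
def extendFirst {d k : ℕ} (a : Fin d) (h : {i : Fin k // (i : ℕ) ≠ 0} → Fin d) :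
    Fin k → Fin d :=
  fun i => if hi : (i : ℕ) = 0 then a else h ⟨i, hi⟩

/-- The partial trace over the tensor factors `2,…,k` of a matrix on `(ℂ^d)^{⊗k}`. -/
noncomputable def ptrRest {d k : ℕ}
    (W : Matrix (Fin k → Fin d) (Fin k → Fin d) ℂ) : Matrix (Fin d) (Fin d) ℂ :=
  Matrix.of fun a a' =>
    ∑ h : {i : Fin k // (i : ℕ) ≠ 0} → Fin d, W (extendFirst a h) (extendFirst a' h)

/-- A `k`-Bose-symmetric extendible channel on `d×d` matrices. -/
def IsBoseSymExtendible (d k : ℕ)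
    (Λ : Matrix (Fin d) (Fin d) ℂ →ₗ[ℂ] Matrix (Fin d) (Fin d) ℂ) : Prop :=
  ∃ V : Matrix (Fin d) (Fin d) ℂ →ₗ[ℂ] Matrix (Fin k → Fin d) (Fin k → Fin d) ℂ,
    IsQuantumChannel V ∧ (∀ X, symProj d k * V X * symProj d k = V X) ∧
    (∀ X, Λ X = ptrRest (V X))

/-- An entanglement-breaking (measure-and-prepare) channel on `d×d` matrices. -/
def IsEBChannel (d : ℕ)
    (Λ : Matrix (Fin d) (Fin d) ℂ →ₗ[ℂ] Matrix (Fin d) (Fin d) ℂ) : Prop :=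
  ∃ (N : ℕ) (M : Fin N → Matrix (Fin d) (Fin d) ℂ) (β : Fin N → (Fin d → ℂ)),
    (∀ y, (M y).PosSemidef) ∧ (∑ y, M y = 1) ∧ (∀ y, star (β y) ⬝ᵥ β y = 1) ∧
    (∀ X, Λ X = ∑ y, ((M y * X).trace) • vecMulVec (β y) (star (β y)))

/-- `(id_A ⊗ Λ)[ρ]`: a map acting on the `B` tensor factor of a bipartite matrix. -/
noncomputable def idTensor {dA dB dB' : ℕ}
    (Λ : Matrix (Fin dB) (Fin dB) ℂ →ₗ[ℂ] Matrix (Fin dB') (Fin dB') ℂ)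
    (ρ : Matrix (Fin dA × Fin dB) (Fin dA × Fin dB) ℂ) :
    Matrix (Fin dA × Fin dB') (Fin dA × Fin dB') ℂ :=
  Matrix.of fun p q => Λ (Matrix.of fun b b' => ρ (p.1, b) (q.1, b')) p.2 q.2

/-- `(Γ ⊗ id_B)[ρ]`: a map acting on the `A` tensor factor of a bipartite matrix. -/
noncomputable def tensorId {dA dA' dB : ℕ}
    (Γ : Matrix (Fin dA) (Fin dA) ℂ →ₗ[ℂ] Matrix (Fin dA') (Fin dA') ℂ)
    (ρ : Matrix (Fin dA × Fin dB) (Fin dA × Fin dB) ℂ) :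
    Matrix (Fin dA' × Fin dB) (Fin dA' × Fin dB) ℂ :=
  Matrix.of fun p q => Γ (Matrix.of fun a a' => ρ (a, p.2) (a', q.2)) p.1 q.1

/-- Supremum of `F(ρ, (id ⊗ Λ)[ρ])` over `k`-Bose-symmetric extendible channels `Λ`. -/
noncomputable def symSup (dA dB k : ℕ)
    (ρ : Matrix (Fin dA × Fin dB) (Fin dA × Fin dB) ℂ) : ℝ :=
  sSup {x : ℝ | ∃ Λ, IsBoseSymExtendible dB k Λ ∧ x = Fid ρ (idTensor Λ ρ)}

/-- Supremum of `F(ρ, (id ⊗ Λ)[ρ])` over entanglement-breaking channels `Λ`. -/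
noncomputable def ebSup (dA dB : ℕ)
    (ρ : Matrix (Fin dA × Fin dB) (Fin dA × Fin dB) ℂ) : ℝ :=
  sSup {x : ℝ | ∃ Λ, IsEBChannel dB Λ ∧ x = Fid ρ (idTensor Λ ρ)}

/-- A quantum-classical bipartite state. -/
def IsQuantumClassical {dA dB : ℕ}
    (ρ : Matrix (Fin dA × Fin dB) (Fin dA × Fin dB) ℂ) : Prop :=
  ∃ (N : ℕ) (p : Fin N → ℝ) (σ : Fin N → Matrix (Fin dA) (Fin dA) ℂ)
    (b : Fin N → (Fin dB → ℂ)),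
    (∀ i, 0 ≤ p i) ∧ (∑ i, p i = 1) ∧ (∀ i, IsDensityMatrix (σ i)) ∧
    (∀ i j, star (b i) ⬝ᵥ b j = if i = j then 1 else 0) ∧
    ρ = ∑ i, (p i : ℂ) • (σ i ⊗ₖ vecMulVec (b i) (star (b i)))

/-- The Choi matrix `J(Λ) = ∑_{x,x'} |x⟩⟨x'| ⊗ Λ(|x⟩⟨x'|)`. -/
noncomputable def choiMatrix {d : ℕ} {Y : Type*} [Fintype Y] [DecidableEq Y]
    (Λ : Matrix (Fin d) (Fin d) ℂ →ₗ[ℂ] Matrix Y Y ℂ) :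
    Matrix (Fin d × Y) (Fin d × Y) ℂ :=
  Matrix.of fun p q => Λ (Matrix.single p.1 q.1 1) p.2 q.2

/-- A `k`-Bose-symmetric extension (on the output system) of a matrix on `ℂ^d ⊗ ℂ^d`. -/
def HasBoseSymExtension {d : ℕ} (k : ℕ)
    (W : Matrix (Fin d × Fin d) (Fin d × Fin d) ℂ) : Prop :=
  ∃ Wt : Matrix (Fin d × (Fin k → Fin d)) (Fin d × (Fin k → Fin d)) ℂ,
    Wt.PosSemidef ∧
    ((1 : Matrix (Fin d) (Fin d) ℂ) ⊗ₖ symProj d k) * Wt *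
        ((1 : Matrix (Fin d) (Fin d) ℂ) ⊗ₖ symProj d k) = Wt ∧
    (∀ x x' b b', W (x, b) (x', b') =
      ∑ h : {i : Fin k // (i : ℕ) ≠ 0} → Fin d,
        Wt (x, extendFirst b h) (x', extendFirst b' h))

/-- The `k`-fold tensor power of a vector in `ℂ^d`. -/
def vecPow {d : ℕ} (k : ℕ) (v : Fin d → ℂ) : (Fin k → Fin d) → ℂ :=
  fun f => ∏ i, v (f i)

end

set_option linter.unusedSectionVars false
set_option linter.unusedVariables false
set_option maxHeartbeats 1000000
section
namespace FidAux
open Matrix Complex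
variable {m : Type*} [Fintype m] [DecidableEq m]

noncomputable def tnorm (A : Matrix m m ℂ) : ℝ := ((msqrt (Aᴴ * A)).trace).re
noncomputable def fsq (A : Matrix m m ℂ) : ℝ := (((Aᴴ * A)).trace).re
noncomputable def cn2 (v : m → ℂ) : ℝ := ∑ i, Complex.normSq (v i)
def col (A : Matrix m m ℂ) (j : m) : m → ℂ := fun i => A i j

lemma msqrt_eq {A : Matrix m m ℂ} (h : A.PosSemidef) : msqrt A =
    (h.1.eigenvectorUnitary : Matrix m m ℂ) * diagonal (Complex.ofReal ∘ Real.sqrt ∘ h.1.eigenvalues) *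
      (star (h.1.eigenvectorUnitary : Matrix m m ℂ)) := dif_pos h

lemma msqrt_posSemidef {A : Matrix m m ℂ} (h : A.PosSemidef) : (msqrt A).PosSemidef := by
  rw [msqrt_eq h]
  have hd : (diagonal (Complex.ofReal ∘ Real.sqrt ∘ h.1.eigenvalues)).PosSemidef := by
    rw [posSemidef_diagonal_iff]; intro i; simp only [Function.comp_apply]; exact_mod_cast Real.sqrt_nonneg _
  simpa [star_eq_conjTranspose] using hd.mul_mul_conjTranspose_same (h.1.eigenvectorUnitary : Matrix m m ℂ)

lemma msqrt_mul_self {A : Matrix m m ℂ} (h : A.PosSemidef) : msqrt A * msqrt A = A := by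
  rw [msqrt_eq h]
  have hu : star (h.1.eigenvectorUnitary : Matrix m m ℂ) * (h.1.eigenvectorUnitary : Matrix m m ℂ) = 1 :=
    (Matrix.mem_unitaryGroup_iff').mp h.1.eigenvectorUnitary.2
  rw [show ∀ P B D : Matrix m m ℂ, (P * B * D) * (P * B * D) = P * (B * (D * P) * B) * D by
    intros; noncomm_ring, hu, mul_one, diagonal_mul_diagonal]
  conv_rhs => rw [h.1.spectral_theorem]
  rw [Unitary.conjStarAlgAut_apply]
  congr 2; congr 1; funext i
  simp only [Function.comp_apply]
  rw [← Complex.ofReal_mul, Real.mul_self_sqrt (h.eigenvalues_nonneg i)]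
  rfl

lemma trace_conjTranspose_mul (E F : Matrix m m ℂ) :
    (Eᴴ * F).trace = ∑ j, (star (col E j)) ⬝ᵥ (col F j) := by
  simp [trace, Matrix.mul_apply, dotProduct, col, diag, conjTranspose_apply]

lemma col_mul (M N : Matrix m m ℂ) (j : m) : col (M * N) j = M *ᵥ (col N j) := by
  funext i; simp [col, Matrix.mul_apply, mulVec, dotProduct]

lemma re_star_dot (v : m → ℂ) : ((star v) ⬝ᵥ v).re = cn2 v := by
  rw [dotProduct, Complex.re_sum]
  refine Finset.sum_congr rfl fun i _ => ?_
  rw [Pi.star_apply, Complex.star_def, ← Complex.normSq_eq_conj_mul_self]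
  simp

lemma fsq_eq_sum_cn2 (A : Matrix m m ℂ) : fsq A = ∑ j, cn2 (col A j) := by
  rw [fsq, trace_conjTranspose_mul, Complex.re_sum]
  exact Finset.sum_congr rfl fun j _ => re_star_dot _

lemma cn2_nonneg (v : m → ℂ) : 0 ≤ cn2 v := Finset.sum_nonneg fun i _ => Complex.normSq_nonneg _

lemma fsq_nonneg (A : Matrix m m ℂ) : 0 ≤ fsq A := by
  rw [fsq_eq_sum_cn2]; exact Finset.sum_nonneg fun j _ => cn2_nonneg _

/-- Cauchy–Schwarz for the dot product, real part version. -/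
lemma re_dot_le (x y : m → ℂ) : ((star x) ⬝ᵥ y).re ≤ Real.sqrt (cn2 x) * Real.sqrt (cn2 y) := by
  have h1 : ((star x) ⬝ᵥ y).re ≤ ∑ i, ‖x i‖ * ‖y i‖ := by
    rw [dotProduct, Complex.re_sum]
    refine Finset.sum_le_sum fun i _ => ?_
    calc ((star x) i * y i).re ≤ ‖(star x) i * y i‖ := Complex.re_le_norm _
      _ = ‖x i‖ * ‖y i‖ := by simp [norm_mul]
  refine h1.trans ?_
  have h2 := Finset.sum_mul_sq_le_sq_mul_sq Finset.univ (fun i => ‖x i‖)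
      (fun i => ‖y i‖)
  have h3 : ∑ i, ‖x i‖ ^ 2 = cn2 x := by
    simp [cn2, Complex.sq_norm]
  have h4 : ∑ i, ‖y i‖ ^ 2 = cn2 y := by
    simp [cn2, Complex.sq_norm]
  rw [h3, h4] at h2
  have h5 : 0 ≤ ∑ i, ‖x i‖ * ‖y i‖ :=
    Finset.sum_nonneg fun i _ => mul_nonneg (norm_nonneg _) (norm_nonneg _)
  calc ∑ i, ‖x i‖ * ‖y i‖
      = Real.sqrt ((∑ i, ‖x i‖ * ‖y i‖) ^ 2) := by
        rw [Real.sqrt_sq h5]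
    _ ≤ Real.sqrt (cn2 x * cn2 y) := Real.sqrt_le_sqrt h2
    _ = Real.sqrt (cn2 x) * Real.sqrt (cn2 y) := Real.sqrt_mul (cn2_nonneg x) _

/-- mulVec by a contraction decreases the `ℓ²` norm. -/
lemma cn2_mulVec_le {U : Matrix m m ℂ} (hU : (1 - Uᴴ * U).PosSemidef) (v : m → ℂ) :
    cn2 (U *ᵥ v) ≤ cn2 v := by
  have h := hU.re_dotProduct_nonneg v
  have e1 : (star v) ⬝ᵥ ((1 - Uᴴ * U) *ᵥ v) = (star v) ⬝ᵥ v - star (U *ᵥ v) ⬝ᵥ (U *ᵥ v) := by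
    rw [sub_mulVec, dotProduct_sub, one_mulVec]
    congr 1
    rw [star_mulVec, ← mulVec_mulVec, dotProduct_mulVec]
  rw [e1] at h
  simp only [Complex.sub_re, RCLike.re_to_complex] at h ⊢
  have := re_star_dot v
  have := re_star_dot (U *ᵥ v)
  linarith


section cdm
variable {C : Matrix m m ℂ} (hC : C.IsHermitian)

/-- `f(C)` via the spectral decomposition of the Hermitian matrix `C`. -/
noncomputable def cdm (f : ℝ → ℝ) : Matrix m m ℂ :=
  (hC.eigenvectorUnitary : Matrix m m ℂ) * diagonal (Complex.ofReal ∘ f ∘ hC.eigenvalues) *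
    (star (hC.eigenvectorUnitary : Matrix m m ℂ))

lemma star_mul_eigU : (star (hC.eigenvectorUnitary : Matrix m m ℂ)) *
    (hC.eigenvectorUnitary : Matrix m m ℂ) = 1 :=
  (Matrix.mem_unitaryGroup_iff').mp (hC.eigenvectorUnitary).2

lemma eigU_mul_star : (hC.eigenvectorUnitary : Matrix m m ℂ) *
    (star (hC.eigenvectorUnitary : Matrix m m ℂ)) = 1 :=
  (Matrix.mem_unitaryGroup_iff).mp (hC.eigenvectorUnitary).2

lemma cdm_mul_cdm (f g : ℝ → ℝ) :
    cdm hC f * cdm hC g = cdm hC (fun t => f t * g t) := by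
  rw [cdm, cdm, cdm]
  rw [show ∀ A B D E F : Matrix m m ℂ, (A * B * D) * (A * E * F) = A * (B * ((D * A) * E)) * F by
    intros; noncomm_ring]
  rw [star_mul_eigU, one_mul, diagonal_mul_diagonal]
  have : (fun i => (Complex.ofReal ∘ f ∘ hC.eigenvalues) i * (Complex.ofReal ∘ g ∘ hC.eigenvalues) i)
      = Complex.ofReal ∘ (fun t => f t * g t) ∘ hC.eigenvalues := by
    funext i
    simp only [Function.comp_apply, Complex.ofReal_mul]
  rw [this]

lemma cdm_congr {f g : ℝ → ℝ} (h : ∀ i, f (hC.eigenvalues i) = g (hC.eigenvalues i)) :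
    cdm hC f = cdm hC g := by
  have : Complex.ofReal ∘ f ∘ hC.eigenvalues = Complex.ofReal ∘ g ∘ hC.eigenvalues := by
    funext i
    simp only [Function.comp_apply]
    exact congrArg _ (h i)
  rw [cdm, cdm, this]

lemma cdm_isHermitian (f : ℝ → ℝ) : (cdm hC f).IsHermitian := by
  have hd : ((diagonal (Complex.ofReal ∘ f ∘ hC.eigenvalues) : Matrix m m ℂ))ᴴ
      = diagonal (Complex.ofReal ∘ f ∘ hC.eigenvalues) := by
    rw [diagonal_conjTranspose]
    have : star (Complex.ofReal ∘ f ∘ hC.eigenvalues) = Complex.ofReal ∘ f ∘ hC.eigenvalues := by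
      funext i
      rw [Pi.star_apply, Function.comp_apply, Function.comp_apply, Complex.star_def,
        Complex.conj_ofReal]
    rw [this]
  rw [cdm, IsHermitian, conjTranspose_mul, conjTranspose_mul, hd]
  simp only [star_eq_conjTranspose, conjTranspose_conjTranspose]
  noncomm_ring

lemma cdm_id : cdm hC (fun t => t) = C := (hC.spectral_theorem).symm

lemma cdm_one : cdm hC (fun _ => 1) = 1 := by
  have h1 : Complex.ofReal ∘ (fun _ : ℝ => (1:ℝ)) ∘ hC.eigenvalues = fun _ => (1:ℂ) := by
    funext i; simp [Function.comp_apply]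
  rw [cdm, h1, diagonal_one, mul_one]
  exact eigU_mul_star hC

lemma cdm_sub (f g : ℝ → ℝ) :
    cdm hC f - cdm hC g = cdm hC (fun t => f t - g t) := by
  rw [cdm, cdm, cdm, ← sub_mul, ← mul_sub, diagonal_sub]
  have : (fun i => (Complex.ofReal ∘ f ∘ hC.eigenvalues) i - (Complex.ofReal ∘ g ∘ hC.eigenvalues) i)
      = Complex.ofReal ∘ (fun t => f t - g t) ∘ hC.eigenvalues := by
    funext i
    simp only [Function.comp_apply, Complex.ofReal_sub]
  rw [this]

lemma cdm_posSemidef {f : ℝ → ℝ} (h : ∀ i, 0 ≤ f (hC.eigenvalues i)) :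
    (cdm hC f).PosSemidef := by
  have hd : (diagonal (Complex.ofReal ∘ f ∘ hC.eigenvalues) : Matrix m m ℂ).PosSemidef := by
    rw [posSemidef_diagonal_iff]
    intro i
    simp only [Function.comp_apply]
    exact_mod_cast h i
  have := hd.mul_mul_conjTranspose_same (hC.eigenvectorUnitary : Matrix m m ℂ)
  simpa [cdm, star_eq_conjTranspose] using this

lemma cdm_zero : cdm hC (fun _ => 0) = 0 := by
  have h1 : Complex.ofReal ∘ (fun _ : ℝ => (0:ℝ)) ∘ hC.eigenvalues = fun _ => (0:ℂ) := by
    funext i; simp [Function.comp_apply]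
  rw [cdm, h1, diagonal_zero, mul_zero, zero_mul]

lemma trace_cdm_mul (f : ℝ → ℝ) (S : Matrix m m ℂ) :
    (cdm hC f * S).trace = ∑ i, (f (hC.eigenvalues i) : ℂ) *
      (((star (hC.eigenvectorUnitary : Matrix m m ℂ)) * S *
        (hC.eigenvectorUnitary : Matrix m m ℂ)) i i) := by
  rw [cdm, mul_assoc, trace_mul_cycle]
  rw [show (star (hC.eigenvectorUnitary : Matrix m m ℂ) * S) *
      (hC.eigenvectorUnitary : Matrix m m ℂ) *
      diagonal (Complex.ofReal ∘ f ∘ hC.eigenvalues) =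
      ((star (hC.eigenvectorUnitary : Matrix m m ℂ)) * S *
      (hC.eigenvectorUnitary : Matrix m m ℂ)) * diagonal (Complex.ofReal ∘ f ∘ hC.eigenvalues) by
    noncomm_ring]
  rw [trace]
  refine Finset.sum_congr rfl fun i _ => ?_
  rw [diag_apply, mul_diagonal]
  simp only [Function.comp_apply]
  ring

lemma trace_cdm (f : ℝ → ℝ) : (cdm hC f).trace = ∑ i, (f (hC.eigenvalues i) : ℂ) := by
  have h := trace_cdm_mul hC f 1
  rw [mul_one] at h
  rw [h]
  refine Finset.sum_congr rfl fun i _ => ?_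
  rw [mul_one, star_mul_eigU]
  simp

lemma conj_diag_apply (i : m) :
    ((star (hC.eigenvectorUnitary : Matrix m m ℂ)) * C *
      (hC.eigenvectorUnitary : Matrix m m ℂ)) i i = (hC.eigenvalues i : ℂ) := by
  have := hC.conjStarAlgAut_star_eigenvectorUnitary
  rw [Unitary.conjStarAlgAut_star_apply] at this
  rw [this]
  simp [Function.comp]

lemma msqrt_eq_cdm {P : Matrix m m ℂ} (hP : P.PosSemidef) :
    msqrt P = cdm hP.1 Real.sqrt := by
  rw [msqrt_eq hP]
  rfl

lemma cdm_mul_cdm_mul (f g k : ℝ → ℝ) :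
    cdm hC f * cdm hC g * cdm hC k = cdm hC (fun t => f t * g t * k t) := by
  rw [cdm_mul_cdm, cdm_mul_cdm]

end cdm

/-- Polar decomposition: `X = U |X|` with `U` a contraction both ways. -/
lemma polar (X : Matrix m m ℂ) : ∃ U : Matrix m m ℂ,
    (1 - Uᴴ * U).PosSemidef ∧ (1 - U * Uᴴ).PosSemidef ∧
    Uᴴ * X = msqrt (Xᴴ * X) ∧ X = U * msqrt (Xᴴ * X) := by
  have hP : (Xᴴ * X).PosSemidef := posSemidef_conjTranspose_mul_self X
  set h : (Xᴴ * X).IsHermitian := hP.1 with hh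
  set g : ℝ → ℝ := fun t => (Real.sqrt t)⁻¹ with hg
  set e : ℝ → ℝ := fun t => if t = 0 then 0 else 1 with he
  have hEig : ∀ i, 0 ≤ h.eigenvalues i := hP.eigenvalues_nonneg
  -- pointwise real facts
  have key1 : ∀ t : ℝ, 0 ≤ t → g t * t * g t = e t := by
    intro t ht
    rcases eq_or_lt_of_le ht with h0 | h0
    · simp [hg, he, ← h0]
    · have hs : Real.sqrt t > 0 := Real.sqrt_pos.mpr h0
      have hss : Real.sqrt t * Real.sqrt t = t := Real.mul_self_sqrt ht
      simp only [hg, he, if_neg (ne_of_gt h0)]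
      field_simp
      rw [Real.sq_sqrt ht]
  have key2 : ∀ t : ℝ, 0 ≤ t → g t * t = Real.sqrt t := by
    intro t ht
    rcases eq_or_lt_of_le ht with h0 | h0
    · simp [hg, ← h0]
    · have hs : Real.sqrt t > 0 := Real.sqrt_pos.mpr h0
      have hss : Real.sqrt t * Real.sqrt t = t := Real.mul_self_sqrt ht
      rw [hg]
      field_simp
      rw [Real.sq_sqrt ht]
  have key3 : ∀ t : ℝ, 0 ≤ t → g t * Real.sqrt t = e t := by
    intro t ht
    rcases eq_or_lt_of_le ht with h0 | h0
    · simp [hg, he, ← h0]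
    · have hs : Real.sqrt t > 0 := Real.sqrt_pos.mpr h0
      simp only [hg, he, if_neg (ne_of_gt h0)]
      field_simp
  have key4 : ∀ t : ℝ, 0 ≤ t → (g t * g t) * t * (g t * g t) = g t * g t := by
    intro t ht
    rcases eq_or_lt_of_le ht with h0 | h0
    · simp [hg, ← h0]
    · have hs : Real.sqrt t > 0 := Real.sqrt_pos.mpr h0
      have hss : Real.sqrt t * Real.sqrt t = t := Real.mul_self_sqrt ht
      rw [hg]
      field_simp
      rw [Real.sq_sqrt ht]
  refine ⟨X * cdm h g, ?_, ?_, ?_, ?_⟩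
  case _ =>
    -- 1 - UᴴU psd
    have hUconj : (X * cdm h g)ᴴ = cdm h g * Xᴴ := by
      rw [conjTranspose_mul, (cdm_isHermitian h g).eq]
    have hUU : (X * cdm h g)ᴴ * (X * cdm h g) = cdm h e := by
      rw [hUconj]
      calc cdm h g * Xᴴ * (X * cdm h g) = cdm h g * (Xᴴ * X) * cdm h g := by noncomm_ring
        _ = cdm h g * cdm h (fun t => t) * cdm h g := by rw [cdm_id]
        _ = cdm h (fun t => g t * t * g t) := by rw [cdm_mul_cdm_mul]
        _ = cdm h e := cdm_congr h fun i => key1 _ (hEig i)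
    rw [hUU, ← cdm_one h, cdm_sub]
    refine cdm_posSemidef h fun i => ?_
    rw [he]
    by_cases h0 : h.eigenvalues i = 0 <;> simp [h0]
  case _ =>
    -- 1 - UUᴴ psd
    have hUconj : (X * cdm h g)ᴴ = cdm h g * Xᴴ := by
      rw [conjTranspose_mul, (cdm_isHermitian h g).eq]
    set Q : Matrix m m ℂ := X * cdm h g * (cdm h g * Xᴴ) with hQ
    have hQeq : X * cdm h g * (X * cdm h g)ᴴ = Q := by rw [hUconj]
    have hQherm : Qᴴ = Q := by
      rw [← hQeq]
      rw [conjTranspose_mul, conjTranspose_conjTranspose]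
    have hQidem : Q * Q = Q := by
      have e1 : Q * Q = X * (cdm h g * cdm h g * (Xᴴ * X) * (cdm h g * cdm h g)) * Xᴴ := by
        rw [hQ]; noncomm_ring
      have e2 : cdm h g * cdm h g * (Xᴴ * X) * (cdm h g * cdm h g)
          = cdm h g * cdm h g := by
        calc cdm h g * cdm h g * (Xᴴ * X) * (cdm h g * cdm h g)
            = (cdm h g * cdm h g) * cdm h (fun t => t) * (cdm h g * cdm h g) := by rw [cdm_id]
          _ = cdm h (fun t => g t * g t) * cdm h (fun t => t) *
              cdm h (fun t => g t * g t) := by rw [cdm_mul_cdm]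
          _ = cdm h (fun t => (g t * g t) * t * (g t * g t)) := by rw [cdm_mul_cdm_mul]
          _ = cdm h (fun t => g t * g t) := cdm_congr h fun i => key4 _ (hEig i)
          _ = cdm h g * cdm h g := (cdm_mul_cdm h g g).symm
      rw [e1, e2, hQ]; noncomm_ring
    rw [hQeq]
    have hsub : (1 - Q)ᴴ * (1 - Q) = 1 - Q := by
      rw [conjTranspose_sub, conjTranspose_one, hQherm]
      have : (1 - Q) * (1 - Q) = 1 - Q - Q + Q * Q := by noncomm_ring
      rw [this, hQidem]; noncomm_ring
    rw [← hsub]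
    exact posSemidef_conjTranspose_mul_self _
  case _ =>
    have hUconj : (X * cdm h g)ᴴ = cdm h g * Xᴴ := by
      rw [conjTranspose_mul, (cdm_isHermitian h g).eq]
    rw [hUconj, msqrt_eq_cdm hP, mul_assoc]
    calc cdm h g * (Xᴴ * X) = cdm h g * cdm h (fun t => t) := by rw [cdm_id]
      _ = cdm h (fun t => g t * t) := by rw [cdm_mul_cdm]
      _ = cdm h Real.sqrt := cdm_congr h fun i => key2 _ (hEig i)
  case _ =>
    rw [msqrt_eq_cdm hP, mul_assoc, cdm_mul_cdm,
      cdm_congr h (g := e) fun i => key3 _ (hEig i)]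
    -- show X * cdm h e = X
    have hzero : X * cdm h (fun t => 1 - e t) = 0 := by
      rw [← conjTranspose_mul_self_eq_zero]
      have hconj : (X * cdm h (fun t => 1 - e t))ᴴ = cdm h (fun t => 1 - e t) * Xᴴ := by
        rw [conjTranspose_mul, (cdm_isHermitian h _).eq]
      rw [hconj]
      calc cdm h (fun t => 1 - e t) * Xᴴ * (X * cdm h (fun t => 1 - e t))
          = cdm h (fun t => 1 - e t) * (Xᴴ * X) * cdm h (fun t => 1 - e t) := by noncomm_ring
        _ = cdm h (fun t => 1 - e t) * cdm h (fun t => t) * cdm h (fun t => 1 - e t) := by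
            rw [cdm_id]
        _ = cdm h (fun t => (1 - e t) * t * (1 - e t)) := by rw [cdm_mul_cdm_mul]
        _ = cdm h (fun _ => 0) := cdm_congr h fun i => by
            rw [he]
            by_cases h0 : h.eigenvalues i = 0 <;> simp [h0]
        _ = 0 := cdm_zero h
    have : cdm h e = cdm h (fun _ => 1) - cdm h (fun t => 1 - e t) := by
      rw [cdm_sub]
      exact cdm_congr h fun i => by ring
    rw [this, mul_sub, hzero, cdm_one, mul_one, sub_zero]



lemma psd_diag_re_nonneg {M : Matrix m m ℂ} (hM : M.PosSemidef) (i : m) : 0 ≤ (M i i).re := by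
  have h := hM.re_dotProduct_nonneg (Pi.single i 1)
  have e : (star (Pi.single i 1 : m → ℂ)) ⬝ᵥ (M *ᵥ (Pi.single i 1 : m → ℂ)) = M i i := by
    rw [mulVec_single]
    simp [dotProduct, Pi.single_apply, Finset.sum_ite_eq]
  rw [e] at h
  exact h

lemma trace_re_le_tnorm {U Z : Matrix m m ℂ} (hU : (1 - Uᴴ * U).PosSemidef) :
    ((Uᴴ * Z).trace).re ≤ tnorm Z := by
  obtain ⟨W, hW1, hW2, hWX, hWp⟩ := polar Z
  have hRpsd : (msqrt (Zᴴ * Z)).PosSemidef :=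
    msqrt_posSemidef (posSemidef_conjTranspose_mul_self Z)
  set R := msqrt (Zᴴ * Z) with hR
  set S := msqrt R with hS
  have hSpsd : S.PosSemidef := msqrt_posSemidef hRpsd
  have hSS : S * S = R := msqrt_mul_self hRpsd
  have htr : (Uᴴ * Z).trace = ((U * S)ᴴ * (W * S)).trace := by
    conv_lhs => rw [hWp, ← hSS]
    rw [conjTranspose_mul, hSpsd.1.eq]
    calc (Uᴴ * (W * (S * S))).trace = ((Uᴴ * W * S) * S).trace := by noncomm_ring
      _ = (S * (Uᴴ * W * S)).trace := (trace_mul_comm _ _).symm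
      _ = ((S * Uᴴ) * (W * S)).trace := by noncomm_ring
  rw [htr, trace_conjTranspose_mul, Complex.re_sum]
  have step : ∀ j, ((star (col (U * S) j)) ⬝ᵥ (col (W * S) j)).re ≤ cn2 (col S j) := by
    intro j
    refine (re_dot_le _ _).trans ?_
    rw [col_mul, col_mul]
    have h1 : cn2 (U *ᵥ col S j) ≤ cn2 (col S j) := cn2_mulVec_le hU _
    have h2 : cn2 (W *ᵥ col S j) ≤ cn2 (col S j) := cn2_mulVec_le hW1 _
    calc Real.sqrt (cn2 (U *ᵥ col S j)) * Real.sqrt (cn2 (W *ᵥ col S j))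
        ≤ Real.sqrt (cn2 (col S j)) * Real.sqrt (cn2 (col S j)) :=
          mul_le_mul (Real.sqrt_le_sqrt h1) (Real.sqrt_le_sqrt h2)
            (Real.sqrt_nonneg _) (Real.sqrt_nonneg _)
      _ = cn2 (col S j) := Real.mul_self_sqrt (cn2_nonneg _)
  refine (Finset.sum_le_sum fun j _ => step j).trans ?_
  have e2 : ∑ j, cn2 (col S j) = fsq S := (fsq_eq_sum_cn2 S).symm
  rw [e2, fsq, hSpsd.1.eq, hSS]
  exact le_of_eq (by rw [tnorm, hR])

lemma fsq_eq_sum_sq (A : Matrix m m ℂ) :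
    fsq A = ∑ p : m × m, Complex.normSq (A p.1 p.2) := by
  rw [fsq_eq_sum_cn2, Fintype.sum_prod_type]
  simp only [cn2, col]
  exact Finset.sum_comm

lemma re_trace_mul_le (E F : Matrix m m ℂ) :
    ((E * F).trace).re ≤ Real.sqrt (fsq E) * Real.sqrt (fsq F) := by
  have h0 : (E * F).trace = ∑ p : m × m, E p.1 p.2 * F p.2 p.1 := by
    rw [Fintype.sum_prod_type, trace]
    refine Finset.sum_congr rfl fun i _ => ?_
    rw [diag_apply, Matrix.mul_apply]
  rw [h0, Complex.re_sum]
  have h1 : ∀ p : m × m, (E p.1 p.2 * F p.2 p.1).re ≤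
      ‖E p.1 p.2‖ * ‖F p.2 p.1‖ := by
    intro p
    calc (E p.1 p.2 * F p.2 p.1).re ≤ ‖E p.1 p.2 * F p.2 p.1‖ := Complex.re_le_norm _
      _ = ‖E p.1 p.2‖ * ‖F p.2 p.1‖ := norm_mul _ _
  refine (Finset.sum_le_sum fun p _ => h1 p).trans ?_
  have h2 := Finset.sum_mul_sq_le_sq_mul_sq Finset.univ
    (fun p : m × m => ‖E p.1 p.2‖) (fun p : m × m => ‖F p.2 p.1‖)
  have h3 : ∑ p : m × m, ‖E p.1 p.2‖ ^ 2 = fsq E := by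
    rw [fsq_eq_sum_sq]
    exact Finset.sum_congr rfl fun p _ => Complex.sq_norm _
  have h4 : ∑ p : m × m, ‖F p.2 p.1‖ ^ 2 = fsq F := by
    rw [fsq_eq_sum_sq]
    rw [← Equiv.sum_comp (Equiv.prodComm m m) (fun p : m × m => Complex.normSq (F p.1 p.2))]
    exact Finset.sum_congr rfl fun p _ => Complex.sq_norm _
  rw [h3, h4] at h2
  have h5 : 0 ≤ ∑ p : m × m, ‖E p.1 p.2‖ * ‖F p.2 p.1‖ :=
    Finset.sum_nonneg fun p _ => mul_nonneg (norm_nonneg _) (norm_nonneg _)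
  calc ∑ p : m × m, ‖E p.1 p.2‖ * ‖F p.2 p.1‖
      = Real.sqrt ((∑ p : m × m, ‖E p.1 p.2‖ * ‖F p.2 p.1‖) ^ 2) := by
        rw [Real.sqrt_sq h5]
    _ ≤ Real.sqrt (fsq E * fsq F) := Real.sqrt_le_sqrt h2
    _ = Real.sqrt (fsq E) * Real.sqrt (fsq F) := Real.sqrt_mul (fsq_nonneg E) _

lemma fsq_conjTranspose_mul_le {U : Matrix m m ℂ} (B : Matrix m m ℂ)
    (hU : (1 - U * Uᴴ).PosSemidef) : fsq (Uᴴ * B) ≤ fsq B := by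
  rw [fsq_eq_sum_cn2, fsq_eq_sum_cn2]
  refine Finset.sum_le_sum fun j _ => ?_
  rw [col_mul]
  refine cn2_mulVec_le ?_ _
  rw [conjTranspose_conjTranspose]
  exact hU

lemma tnorm_add_mul_le (Y B Cm : Matrix m m ℂ) :
    tnorm (Y + B * Cm) ≤ tnorm Y + Real.sqrt (fsq B) * Real.sqrt (fsq Cm) := by
  obtain ⟨U, hU1, hU2, hUX, _⟩ := polar (Y + B * Cm)
  have e1 : tnorm (Y + B * Cm) = ((Uᴴ * (Y + B * Cm)).trace).re := by
    rw [hUX, tnorm]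
  have e2 : Uᴴ * (Y + B * Cm) = Uᴴ * Y + (Uᴴ * B) * Cm := by noncomm_ring
  rw [e1, e2, trace_add, Complex.add_re]
  refine add_le_add (trace_re_le_tnorm hU1) ?_
  refine (re_trace_mul_le _ _).trans ?_
  exact mul_le_mul_of_nonneg_right
    (Real.sqrt_le_sqrt (fsq_conjTranspose_mul_le B hU2)) (Real.sqrt_nonneg _)

lemma fsq_neg (A : Matrix m m ℂ) : fsq (-A) = fsq A := by
  rw [fsq, fsq, conjTranspose_neg, neg_mul_neg]

lemma tnorm_sub_symm (A B : Matrix m m ℂ) : tnorm (A - B) = tnorm (B - A) := by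
  rw [tnorm, tnorm]
  congr 2
  rw [show B - A = -(A - B) from (neg_sub A B).symm, conjTranspose_neg, neg_mul_neg]


lemma powers_stormer {ρ τ : Matrix m m ℂ} (hρ : ρ.PosSemidef) (hτ : τ.PosSemidef) :
    fsq (msqrt ρ - msqrt τ) ≤ tnorm (ρ - τ) := by
  set A := msqrt ρ with hA'
  set B := msqrt τ with hB'
  have hApsd : A.PosSemidef := msqrt_posSemidef hρ
  have hBpsd : B.PosSemidef := msqrt_posSemidef hτ
  have hAA : A * A = ρ := msqrt_mul_self hρ
  have hBB : B * B = τ := msqrt_mul_self hτ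
  have hC : (A - B).IsHermitian := hApsd.1.sub hBpsd.1
  set lam := hC.eigenvalues with hlam
  set V := (hC.eigenvectorUnitary : Matrix m m ℂ) with hV
  set sgn : ℝ → ℝ := fun t => if t < 0 then -1 else if t = 0 then 0 else 1 with hsgn
  have hsgn_mul : ∀ t : ℝ, sgn t * t = |t| := by
    intro t
    rcases lt_trichotomy t 0 with h0 | h0 | h0
    · simp only [hsgn, if_pos h0, abs_of_neg h0]; ring
    · simp [hsgn, h0]
    · simp only [hsgn, if_neg (not_lt.mpr h0.le), if_neg h0.ne', abs_of_pos h0]; ring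
  have hdecomp : ρ - τ = A * (A - B) + (A - B) * B := by
    rw [← hAA, ← hBB]; noncomm_ring
  set U := cdm hC sgn with hU'
  have hU_herm : Uᴴ = U := (cdm_isHermitian hC sgn).eq
  have hUcontr : (1 - Uᴴ * U).PosSemidef := by
    rw [hU_herm, hU', cdm_mul_cdm, ← cdm_one hC, cdm_sub]
    refine cdm_posSemidef hC fun i => ?_
    have h1 : sgn (lam i) * sgn (lam i) ≤ 1 := by
      rcases lt_trichotomy (lam i) 0 with h0 | h0 | h0
      · norm_num [hsgn, h0]
      · norm_num [hsgn, h0]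
      · norm_num [hsgn, not_lt.mpr h0.le, h0.ne']
    linarith
  have hUC : U * (A - B) = cdm hC (fun t => |t|) := by
    calc U * (A - B) = cdm hC sgn * cdm hC (fun t => t) := by rw [cdm_id]
      _ = cdm hC (fun t => sgn t * t) := by rw [cdm_mul_cdm]
      _ = cdm hC (fun t => |t|) := cdm_congr hC fun i => hsgn_mul _
  have hCU : (A - B) * U = cdm hC (fun t => |t|) := by
    calc (A - B) * U = cdm hC (fun t => t) * cdm hC sgn := by rw [cdm_id]
      _ = cdm hC (fun t => t * sgn t) := by rw [cdm_mul_cdm]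
      _ = cdm hC (fun t => |t|) := cdm_congr hC fun i => by rw [mul_comm]; exact hsgn_mul _
  -- step 1 : fsq (A - B) = ∑ lam i ^ 2
  have t1 : fsq (A - B) = ∑ i, lam i ^ 2 := by
    have e1 : (A - B)ᴴ * (A - B) = cdm hC (fun t => t * t) := by
      calc (A - B)ᴴ * (A - B) = (A - B) * (A - B) := by rw [hC.eq]
        _ = cdm hC (fun t => t) * cdm hC (fun t => t) := by rw [cdm_id]
        _ = cdm hC (fun t => t * t) := by rw [cdm_mul_cdm]
    rw [fsq, e1, trace_cdm, Complex.re_sum]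
    refine Finset.sum_congr rfl fun i _ => ?_
    rw [Complex.ofReal_re, pow_two]
  -- step 2 : |lam i| ≤ diagonal entries of V† (A+B) V
  have t2 : ∀ i, |lam i| ≤ ((star V * (A + B) * V) i i).re := by
    intro i
    have hBB2 : (B + B).PosSemidef := hBpsd.add hBpsd
    have hAA2 : (A + A).PosSemidef := hApsd.add hApsd
    have c1 : (star V * (B + B) * V).PosSemidef := by
      have := hBB2.conjTranspose_mul_mul_same V
      rwa [← star_eq_conjTranspose] at this
    have c2 : (star V * (A + A) * V).PosSemidef := by
      have := hAA2.conjTranspose_mul_mul_same V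
      rwa [← star_eq_conjTranspose] at this
    have d1 := psd_diag_re_nonneg c1 i
    have d2 := psd_diag_re_nonneg c2 i
    have eB : star V * (B + B) * V = star V * (A + B) * V - star V * (A - B) * V := by
      noncomm_ring
    have eA : star V * (A + A) * V = star V * (A + B) * V + star V * (A - B) * V := by
      noncomm_ring
    have ediag : (star V * (A - B) * V) i i = (lam i : ℂ) := conj_diag_apply hC i
    rw [eB, Matrix.sub_apply, ediag, Complex.sub_re, Complex.ofReal_re] at d1
    rw [eA, Matrix.add_apply, ediag, Complex.add_re, Complex.ofReal_re] at d2
    rw [abs_le]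
    constructor <;> linarith
  -- step 3
  have t3 : ∑ i, lam i ^ 2 ≤ ∑ i, |lam i| * ((star V * (A + B) * V) i i).re := by
    refine Finset.sum_le_sum fun i _ => ?_
    have : lam i ^ 2 = |lam i| * |lam i| := by rw [pow_two, ← abs_mul_abs_self]
    rw [this]
    exact mul_le_mul_of_nonneg_left (t2 i) (abs_nonneg _)
  -- step 4
  have t4 : ∑ i, |lam i| * ((star V * (A + B) * V) i i).re
      = ((cdm hC (fun t => |t|) * (A + B)).trace).re := by
    rw [trace_cdm_mul, Complex.re_sum]
    refine Finset.sum_congr rfl fun i _ => ?_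
    rw [Complex.re_ofReal_mul]
  -- step 5
  have t5 : (cdm hC (fun t => |t|) * (A + B)).trace = (Uᴴ * (ρ - τ)).trace := by
    rw [hU_herm]
    have e1 : U * (ρ - τ) = U * A * (A - B) + U * (A - B) * B := by
      rw [hdecomp]; noncomm_ring
    rw [e1, trace_add, trace_mul_cycle (U) (A) (A - B)]
    have e2 : (A - B) * U * A = cdm hC (fun t => |t|) * A := by rw [hCU]
    have e3 : U * (A - B) * B = cdm hC (fun t => |t|) * B := by rw [hUC]
    rw [e2, e3, mul_add, trace_add]
  have t6 : ((Uᴴ * (ρ - τ)).trace).re ≤ tnorm (ρ - τ) := trace_re_le_tnorm hUcontr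
  calc fsq (A - B) = ∑ i, lam i ^ 2 := t1
    _ ≤ ∑ i, |lam i| * ((star V * (A + B) * V) i i).re := t3
    _ = ((cdm hC (fun t => |t|) * (A + B)).trace).re := t4
    _ = ((Uᴴ * (ρ - τ)).trace).re := by rw [t5]
    _ ≤ tnorm (ρ - τ) := t6
lemma fid_eq_tnorm {ρ σ : Matrix m m ℂ} (hρ : ρ.PosSemidef) (hσ : σ.PosSemidef) :
    Fid ρ σ = tnorm (msqrt σ * msqrt ρ) := by
  have e : (msqrt σ * msqrt ρ)ᴴ * (msqrt σ * msqrt ρ) = msqrt ρ * σ * msqrt ρ := by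
    rw [conjTranspose_mul, (msqrt_posSemidef hσ).1.eq, (msqrt_posSemidef hρ).1.eq]
    calc msqrt ρ * msqrt σ * (msqrt σ * msqrt ρ)
        = msqrt ρ * (msqrt σ * msqrt σ) * msqrt ρ := by noncomm_ring
      _ = msqrt ρ * σ * msqrt ρ := by rw [msqrt_mul_self hσ]
  unfold Fid tnorm
  rw [e]

end FidAux

end

/-- For density matrices ρ, σ, τ on ℂⁿ,
`|F(ρ,σ) − F(τ,σ)| ≤ √2 · √(Δ(τ,ρ))`. -/
theorem stmt1 {n : ℕ} (ρ σ τ : Matrix (Fin n) (Fin n) ℂ)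
    (hρ : IsDensityMatrix ρ) (hσ : IsDensityMatrix σ) (hτ : IsDensityMatrix τ) :
    |Fid ρ σ - Fid τ σ| ≤ Real.sqrt 2 * Real.sqrt (trDist τ ρ) := by
  obtain ⟨hρp, hρt⟩ := hρ
  obtain ⟨hσp, hσt⟩ := hσ
  obtain ⟨hτp, hτt⟩ := hτ
  have hfsqσ : FidAux.fsq (msqrt σ) = 1 := by
    unfold FidAux.fsq
    rw [(FidAux.msqrt_posSemidef hσp).1.eq, FidAux.msqrt_mul_self hσp, hσt, Complex.one_re]
  have hC2 : FidAux.fsq (msqrt ρ - msqrt τ) ≤ 2 * trDist τ ρ := by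
    have h1 := FidAux.powers_stormer hρp hτp
    have h2 : FidAux.tnorm (ρ - τ) = 2 * trDist τ ρ := by
      rw [FidAux.tnorm_sub_symm]
      unfold FidAux.tnorm trDist
      ring
    linarith
  have d1 : Fid ρ σ ≤ Fid τ σ + Real.sqrt (FidAux.fsq (msqrt ρ - msqrt τ)) := by
    rw [FidAux.fid_eq_tnorm hρp hσp, FidAux.fid_eq_tnorm hτp hσp]
    have e : msqrt σ * msqrt ρ = msqrt σ * msqrt τ + msqrt σ * (msqrt ρ - msqrt τ) := by
      noncomm_ring
    rw [e]
    have h := FidAux.tnorm_add_mul_le (msqrt σ * msqrt τ) (msqrt σ) (msqrt ρ - msqrt τ)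
    rwa [hfsqσ, Real.sqrt_one, one_mul] at h
  have d2 : Fid τ σ ≤ Fid ρ σ + Real.sqrt (FidAux.fsq (msqrt ρ - msqrt τ)) := by
    rw [FidAux.fid_eq_tnorm hρp hσp, FidAux.fid_eq_tnorm hτp hσp]
    have e : msqrt σ * msqrt τ = msqrt σ * msqrt ρ + msqrt σ * (msqrt τ - msqrt ρ) := by
      noncomm_ring
    rw [e]
    have h := FidAux.tnorm_add_mul_le (msqrt σ * msqrt ρ) (msqrt σ) (msqrt τ - msqrt ρ)
    have efsq : FidAux.fsq (msqrt τ - msqrt ρ) = FidAux.fsq (msqrt ρ - msqrt τ) := by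
      rw [show msqrt τ - msqrt ρ = -(msqrt ρ - msqrt τ) from (neg_sub _ _).symm, FidAux.fsq_neg]
    rwa [hfsqσ, Real.sqrt_one, one_mul, efsq] at h
  have habs : |Fid ρ σ - Fid τ σ| ≤ Real.sqrt (FidAux.fsq (msqrt ρ - msqrt τ)) := by
    rw [abs_sub_le_iff]
    constructor <;> linarith
  refine habs.trans ?_
  calc Real.sqrt (FidAux.fsq (msqrt ρ - msqrt τ)) ≤ Real.sqrt (2 * trDist τ ρ) :=
      Real.sqrt_le_sqrt hC2
    _ = Real.sqrt 2 * Real.sqrt (trDist τ ρ) := Real.sqrt_mul (by norm_num) _
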